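/- Let 𝔑 be a monomial group with real powers, 𝔐 a subgroup of 𝔑 closed under real powers with a distinguished element x ∈ 𝔐 satisfying x ≻ 1, and set K := ℝ[[𝔐]], viewed as a subfield of ℝ[[𝔑]]. Let h ∈ ℝ[[𝔑]] with h > ℝ. Then every K-composition with h is a strongly ℝ-linear embedding of ordered fields K → ℝ[[𝔑]]. -/

import Mathlib

noncomputable section

open Classical

namespace LogHyp

universe u v w

/-- A subset of a totally ordered set is *well-based* if it contains no infinite
strictly increasing sequence. -/
def WellBased {M : Type u} [Preorder M] (S : Set M) : Prop :=
  ¬ ∃ f : ℕ → M, StrictMono f ∧ ∀ n, f n ∈ S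

theorem wellBased_isPWO {M : Type u} [LinearOrder M] {S : Set Mᵒᵈ}
    (h : WellBased (OrderDual.toDual ⁻¹' S)) : S.IsPWO := by
  rw [Set.isPWO_iff_isWF, Set.isWF_iff_no_descending_seq]
  intro f hf hmem
  exact h ⟨fun n => OrderDual.ofDual (f n), fun a b hab => hf hab, hmem⟩

/-- A family in a field of well-based series (series with monomials in `Mᵒᵈ`,
so that supports are well-based as subsets of `M`) is summable if the union of
the supports is well-based and each monomial lies in the support of only
finitely many members. -/
def IsSummable {M : Type u} [LinearOrder M] {R : Type v} [Zero R] {ι : Type w}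
    (f : ι → HahnSeries Mᵒᵈ R) : Prop :=
  WellBased (OrderDual.toDual ⁻¹' (⋃ i, (f i).support)) ∧
    ∀ g : Mᵒᵈ, {i | (f i).coeff g ≠ 0}.Finite

/-- The sum of a summable family (junk value `0` if the family is not summable). -/
noncomputable def famSum {M : Type u} [LinearOrder M] {R : Type v} [AddCommMonoid R] {ι : Type w}
    (f : ι → HahnSeries Mᵒᵈ R) : HahnSeries Mᵒᵈ R :=
  if h : IsSummable f then
    (⟨f, wellBased_isPWO h.1, h.2⟩ : HahnSeries.SummableFamily Mᵒᵈ R ι).hsum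
  else 0

/-- Strongly `k`-linear maps between fields of well-based series:
`k`-linear maps sending summable families to summable families, preserving sums. -/
def IsStronglyLinear {k : Type v} [Semiring k] {M : Type u} {N : Type w}
    [LinearOrder M] [LinearOrder N]
    (Φ : HahnSeries Mᵒᵈ k → HahnSeries Nᵒᵈ k) : Prop :=
  (∀ (c : k) (f : HahnSeries Mᵒᵈ k), Φ (c • f) = c • Φ f) ∧
  (∀ f g, Φ (f + g) = Φ f + Φ g) ∧
  ∀ {ι : Type u} (f : ι → HahnSeries Mᵒᵈ k), IsSummable f →
    IsSummable (fun i => Φ (f i)) ∧ Φ (famSum f) = famSum fun i => Φ (f i)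

/-- `f ≺ g`: the dominant monomial of `f` is smaller than that of `g`
(with `𝔡 0` below all monomials). -/
def prec {M : Type u} [LinearOrder M] {R : Type v} [Zero R]
    (f g : HahnSeries Mᵒᵈ R) : Prop :=
  g ≠ 0 ∧ ∀ m ∈ f.support, ∃ n ∈ g.support,
    (OrderDual.ofDual m : M) < OrderDual.ofDual n

/-- `f ⪯ g`: the dominant monomial of `f` is at most that of `g`. -/
def preceq {M : Type u} [LinearOrder M] {R : Type v} [Zero R]
    (f g : HahnSeries Mᵒᵈ R) : Prop :=
  ∀ m ∈ f.support, ∃ n ∈ g.support, (OrderDual.ofDual m : M) ≤ OrderDual.ofDual n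

/-- The coefficient of the dominant (i.e. maximal) monomial of `f` (0 for `f = 0`). -/
noncomputable def leadCoeff {M : Type u} [LinearOrder M] {k : Type v} [Zero k]
    (f : HahnSeries Mᵒᵈ k) : k :=
  if hf : f = 0 then 0
  else f.coeff (f.isWF_support.min (HahnSeries.support_nonempty_iff.mpr hf))

/-- `f > 0` for real well-based series: the leading coefficient is positive. -/
def SPos {M : Type u} [LinearOrder M] (f : HahnSeries Mᵒᵈ ℝ) : Prop := 0 < leadCoeff f

/-- The ordering of real well-based series: `f < g` iff `g - f` has positive
leading coefficient. -/
def SLt {M : Type u} [LinearOrder M] (f g : HahnSeries Mᵒᵈ ℝ) : Prop := SPos (g - f)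

/-- `f > ℝ` : `f` exceeds every real constant. -/
def gtR {M : Type u} [AddCommGroup M] [LinearOrder M] [IsOrderedAddMonoid M] (f : HahnSeries Mᵒᵈ ℝ) : Prop :=
  ∀ r : ℝ, SLt (HahnSeries.C r) f

/-- `log(1+ε) = ∑_{n≥1} (-1)^{n-1} ε^n / n`, for `ε ≺ 1`. -/
noncomputable def log1p {M : Type u} [AddCommGroup M] [LinearOrder M] [IsOrderedAddMonoid M] {k : Type v} [Field k]
    (ε : HahnSeries Mᵒᵈ k) : HahnSeries Mᵒᵈ k :=
  famSum fun n : ℕ => ((-1 : k) ^ n / ((n : k) + 1)) • ε ^ (n + 1)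

/-- `exp(ε) = ∑_{n≥0} ε^n / n!`, for `ε ≺ 1`. -/
noncomputable def expS {M : Type u} [AddCommGroup M] [LinearOrder M] [IsOrderedAddMonoid M] {k : Type v} [Field k]
    (f : HahnSeries Mᵒᵈ k) : HahnSeries Mᵒᵈ k :=
  famSum fun n : ℕ => ((n.factorial : k))⁻¹ • f ^ n

/-- The operator support of a linear operator: the smallest set `𝔖` of monomials with
`supp S(m) ⊆ 𝔖·m` for all monomials `m`. -/
def opSupport {M : Type u} [AddCommGroup M] [LinearOrder M] [IsOrderedAddMonoid M] {k : Type v} [Zero k] [One k]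
    (S : HahnSeries Mᵒᵈ k → HahnSeries Mᵒᵈ k) : Set Mᵒᵈ :=
  ⋃ m : Mᵒᵈ, (fun g => g - m) '' (S (HahnSeries.single m 1)).support



/-- The ordinals below `α`. -/
abbrev Idx (α : Ordinal.{0}) : Type 1 := {β : Ordinal.{0} // β < α}

/-- The monomial group `𝔏_{<α}`, written additively: a logarithmic hypermonomial
`ℓ^r = ∏_{β<α} ℓ_β^{r_β}` is identified with its exponent sequence `r`, and the
group is ordered lexicographically. -/
abbrev Mon (α : Ordinal.{0}) : Type 1 := Lex (Idx α → ℝ)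

/-- The field `𝕃_{<α} = ℝ[[𝔏_{<α}]]` of logarithmic hyperseries: well-based series
with real coefficients and monomials in `𝔏_{<α}` (we use the order dual so that
supports are well-based, i.e. reverse well-ordered, subsets of `𝔏_{<α}`). -/
abbrev LSeries (α : Ordinal.{0}) : Type 1 := HahnSeries (Mon α)ᵒᵈ ℝ

/-- The monomial `ℓ^r` as an element of the (dualised) monomial group. -/
def monExp (α : Ordinal.{0}) (r : Idx α → ℝ) : (Mon α)ᵒᵈ := OrderDual.toDual (toLex r)

/-- The monomial `ℓ^r` as an element of `𝕃_{<α}`. -/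
noncomputable def monS (α : Ordinal.{0}) (r : Idx α → ℝ) : LSeries α :=
  HahnSeries.single (monExp α r) 1

/-- The exponent sequence of the hyperlogarithm `ℓ_β`. -/
def ellExp (α β : Ordinal.{0}) : Idx α → ℝ := fun ρ => if ρ.1 = β then 1 else 0

/-- The hyperlogarithm `ℓ_β` as an element of `𝕃_{<α}` (for `β < α`). -/
noncomputable def ell (α β : Ordinal.{0}) : LSeries α := monS α (ellExp α β)

/-- The exponent sequence of `ℓ_β' = ∏_{ρ<β} ℓ_ρ⁻¹`. -/
def derExp (α β : Ordinal.{0}) : Idx α → ℝ := fun ρ => if ρ.1 < β then -1 else 0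

/-- The exponent sequence of `ℓ_β† = ∏_{ρ≤β} ℓ_ρ⁻¹`. -/
def dagExp (α β : Ordinal.{0}) : Idx α → ℝ := fun ρ => if ρ.1 ≤ β then -1 else 0

/-- `D` is *the* derivation of `𝕃_{<α}`: a strongly `ℝ`-linear derivation
with `D ℓ_β = ∏_{ρ<β} ℓ_ρ⁻¹` for all `β < α`. -/
def IsDerL (α : Ordinal.{0}) (D : LSeries α → LSeries α) : Prop :=
  IsStronglyLinear D ∧ (∀ f g, D (f * g) = f * D g + g * D f) ∧
    ∀ β : Ordinal.{0}, β < α → D (ell α β) = monS α (derExp α β)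

/-- The exponent sequence of the dominant monomial of `f` (0 if `f = 0`). -/
noncomputable def domExp (α : Ordinal.{0}) (f : LSeries α) : Idx α → ℝ :=
  if hf : f = 0 then 0
  else ofLex (OrderDual.ofDual
    (f.isWF_support.min (HahnSeries.support_nonempty_iff.mpr hf)))

/-- The logarithm on `𝕃_{<α}^{>0}` (`α` a limit ordinal):
`log (c·ℓ^r·(1+ε)) = ∑_β r_β ℓ_{β+1} + log c + ∑_{n≥1} (-1)^{n-1} ε^n/n`. -/
noncomputable def logFn (α : Ordinal.{0}) (f : LSeries α) : LSeries α :=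
  (famSum fun β : Idx α => domExp α f β • ell α (β.1 + 1))
    + HahnSeries.C (Real.log (leadCoeff f))
    + log1p (f * (HahnSeries.single (monExp α (domExp α f)) (leadCoeff f))⁻¹ - 1)

/-- The logarithmicity `λ_f`: the least `β` with `r_β ≠ 0`, where `𝔡(f) = ℓ^r`. -/
noncomputable def lambdaOf (α : Ordinal.{0}) (f : LSeries α) : Ordinal.{0} :=
  sInf {β : Ordinal.{0} | ∃ h : β < α, domExp α f ⟨β, h⟩ ≠ 0}

/-- The coefficient of `ω^δ` in the Cantor normal form of `μ`. -/
noncomputable def cnfCoeff (μ δ : Ordinal.{0}) : ℕ :=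
  Cardinal.toNat (Ordinal.card ((μ / Ordinal.omega0 ^ δ) % Ordinal.omega0))

/-- `λ_{g;ν}`: writing `λ_g = ω^{β₁}n₁ + ⋯ + ω^{β_k}n_k` in Cantor normal form,
this is `n_i` if `ν = ω^{β_i+1}`, and `0` for every other ordinal `ν`. -/
noncomputable def lambdaCoeff (α : Ordinal.{0}) (g : LSeries α) (ν : Ordinal.{0}) : ℕ :=
  if h : ∃ δ : Ordinal.{0}, ν = Ordinal.omega0 ^ (δ + 1) then
    cnfCoeff (lambdaOf α g) h.choose
  else 0

/-- A composition on `𝕃_{<α}` (axioms (CL1)–(CL5)); `C f g` is `f ∘ g`,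
subject to conditions only when the right argument is `> ℝ`. -/
def IsCompositionOp (α : Ordinal.{0}) (C : LSeries α → LSeries α → LSeries α) : Prop :=
  -- (CL1): for each g > ℝ, `f ↦ f ∘ g` is an ℝ-algebra homomorphism
  (∀ g, gtR g →
    C 1 g = 1 ∧
    (∀ f₁ f₂, C (f₁ + f₂) g = C f₁ g + C f₂ g) ∧
    (∀ f₁ f₂, C (f₁ * f₂) g = C f₁ g * C f₂ g) ∧
    (∀ c : ℝ, C (HahnSeries.C c) g = HahnSeries.C c)) ∧
  -- (CL2)
  (∀ f, C f (ell α 0) = f) ∧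
  (∀ g, gtR g → C (ell α 0) g = g) ∧
  -- (CL3)
  (∀ f g, gtR g → SPos f → C (logFn α f) g = logFn α (C f g)) ∧
  -- (CL4)
  (∀ g, gtR g → ∀ {ι : Type 1} (F : ι → LSeries α), IsSummable F →
    IsSummable (fun i => C (F i) g) ∧ C (famSum F) g = famSum fun i => C (F i) g) ∧
  -- (CL5)
  (∀ f g h, gtR g → gtR h → C (C f g) h = C f (C g h))

/-- A composition admits Taylor expansion if for `g > ℝ` and `h ≺ g` the family
`(f⁽ⁿ⁾∘g)·hⁿ/n!` is summable with sum `f∘(g+h)`. -/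
def AdmitsTaylor (α : Ordinal.{0}) (D : LSeries α → LSeries α)
    (C : LSeries α → LSeries α → LSeries α) : Prop :=
  ∀ f g h, gtR g → prec h g →
    IsSummable (fun n : ℕ => ((n.factorial : ℝ))⁻¹ • (C (D^[n] f) g * h ^ n)) ∧
    C f (g + h) = famSum fun n : ℕ => ((n.factorial : ℝ))⁻¹ • (C (D^[n] f) g * h ^ n)

/-- The hyperlogarithm identities for a composition on `𝕃_{<ω^λ}`. -/
def HyperlogIds (lam : Ordinal.{0})
    (C : LSeries (Ordinal.omega0 ^ lam) → LSeries (Ordinal.omega0 ^ lam) →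
      LSeries (Ordinal.omega0 ^ lam)) : Prop :=
  (∀ β γ : Ordinal.{0}, β < lam → γ < Ordinal.omega0 ^ (β + 1) →
      C (ell (Ordinal.omega0 ^ lam) γ) (ell (Ordinal.omega0 ^ lam) (Ordinal.omega0 ^ β))
        = ell (Ordinal.omega0 ^ lam) (Ordinal.omega0 ^ β + γ)) ∧
  (∀ β : Ordinal.{0}, β < lam →
      C (ell (Ordinal.omega0 ^ lam) (Ordinal.omega0 ^ (β + 1)))
          (ell (Ordinal.omega0 ^ lam) (Ordinal.omega0 ^ β))
        = ell (Ordinal.omega0 ^ lam) (Ordinal.omega0 ^ (β + 1)) - 1) ∧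
  (∀ β γ : Ordinal.{0}, β < γ → γ < lam → Order.IsSuccLimit γ →
      (C (ell (Ordinal.omega0 ^ lam) (Ordinal.omega0 ^ γ))
          (ell (Ordinal.omega0 ^ lam) (Ordinal.omega0 ^ β))).coeff 0 = 0)



/-!
Axiom (3) writes `c f` as the sum of the `f_m • c m`, and applied to series with arbitrary
well-based support it makes `(c m)_{m ∈ S}` summable for every well-based `S`; exchanging the
order of summation then shows that `c` is strongly linear. A strongly linear map that is
multiplicative on monomials is multiplicative, since `f * g` is the sum of the products of the
terms of `f` and `g`; so `c` is a ring homomorphism of fields, hence injective.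

For the order, let `m ≺ 1`. The powers `m ^ n` form a summable family, hence so do their images
`(c m) ^ n`, which forces `c m ≺ 1`. Thus `c` is strictly increasing on monomials for `≺`, and
the leading term of `c f` comes from the leading term `f_𝔡 • 𝔡` of `f` alone: its coefficient is
`f_𝔡` times that of `c 𝔡`. The latter is positive because `c 𝔡 = (c (𝔡 ^ (1/2)))²`, so `c f` and
`f` have leading coefficients of the same sign.
-/

theorem finsum_comm_of_finite {α β M : Type*} [AddCommMonoid M] (F : α → β → M)
    (hF : (Function.support fun p : α × β => F p.1 p.2).Finite) :
    ∑ᶠ a, ∑ᶠ b, F a b = ∑ᶠ b, ∑ᶠ a, F a b := by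
  have hF' : (Function.support fun p : β × α => F p.2 p.1).Finite :=
    (hF.image Prod.swap).subset fun p hp => ⟨p.swap, hp, rfl⟩
  rw [← finsum_curry (fun p : α × β => F p.1 p.2) hF,
    ← finsum_curry (fun p : β × α => F p.2 p.1) hF']
  exact finsum_comp_equiv (Equiv.prodComm α β) (f := fun p : β × α => F p.2 p.1)

section Summable

variable {Γ : Type*} [LinearOrder Γ] {R : Type*} [AddCommMonoid R] {ι : Type*}

theorem wellBased_iff_isPWO {S : Set Γᵒᵈ} :
    WellBased (OrderDual.toDual ⁻¹' S) ↔ S.IsPWO := by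
  refine ⟨wellBased_isPWO, fun h => ?_⟩
  rintro ⟨f, hf, hmem⟩
  rw [Set.isPWO_iff_isWF, Set.isWF_iff_no_descending_seq] at h
  exact h (fun n => OrderDual.toDual (f n)) (fun a b hab => hf hab) hmem

theorem isSummable_iff {f : ι → HahnSeries Γᵒᵈ R} :
    IsSummable f ↔ (⋃ i, (f i).support).IsPWO ∧ ∀ g, {i | (f i).coeff g ≠ 0}.Finite := by
  rw [IsSummable, wellBased_iff_isPWO]

def IsSummable.toSummableFamily {f : ι → HahnSeries Γᵒᵈ R} (h : IsSummable f) :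
    HahnSeries.SummableFamily Γᵒᵈ R ι :=
  ⟨f, (isSummable_iff.1 h).1, h.2⟩

theorem isSummable_coe (s : HahnSeries.SummableFamily Γᵒᵈ R ι) : IsSummable ⇑s :=
  isSummable_iff.2 ⟨s.isPWO_iUnion_support, s.finite_co_support⟩

theorem famSum_eq_hsum {f : ι → HahnSeries Γᵒᵈ R}
    (s : HahnSeries.SummableFamily Γᵒᵈ R ι) (hs : ⇑s = f) : famSum f = s.hsum := by
  subst hs
  rw [famSum, dif_pos (isSummable_coe s)]
  rfl

theorem IsSummable.comp_equiv {κ : Type*} {f : ι → HahnSeries Γᵒᵈ R} (h : IsSummable f)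
    (e : κ ≃ ι) : IsSummable (f ∘ e) :=
  isSummable_coe (HahnSeries.SummableFamily.Equiv e.symm h.toSummableFamily)

theorem coeff_famSum {f : ι → HahnSeries Γᵒᵈ R} (h : IsSummable f) (g : Γᵒᵈ) :
    (famSum f).coeff g = ∑ᶠ i, (f i).coeff g := by
  rw [famSum_eq_hsum (f := f) h.toSummableFamily rfl, HahnSeries.SummableFamily.coeff_hsum]
  rfl

end Summable

section Terms

variable {Γ : Type*} [PartialOrder Γ] {R : Type*} [AddCommMonoid R]

open HahnSeries SummableFamily

def _root_.HahnSeries.SummableFamily.terms (f : HahnSeries Γ R) : SummableFamily Γ R Γ where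
  toFun m := single m (f.coeff m)
  isPWO_iUnion_support' := f.isPWO_support.mono <| Set.iUnion_subset fun m g hg => by
    obtain rfl := support_single_subset hg
    simpa using hg
  finite_co_support' g := (Set.finite_singleton g).subset fun m hm => by
    by_contra hne
    exact hm (coeff_single_of_ne (Ne.symm hne))

@[simp]
theorem _root_.HahnSeries.SummableFamily.terms_apply (f : HahnSeries Γ R) (m : Γ) :
    terms f m = single m (f.coeff m) := rfl

theorem _root_.HahnSeries.SummableFamily.hsum_terms (f : HahnSeries Γ R) :
    (terms f).hsum = f := by
  ext g
  rw [coeff_hsum]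
  simp only [terms_apply]
  rw [finsum_eq_single _ g fun m hm => coeff_single_of_ne (Ne.symm hm)]
  exact coeff_single_same g _

end Terms

theorem _root_.HahnSeries.exists_support_eq {Γ : Type*} [PartialOrder Γ] {R : Type*} [Zero R]
    [One R] [NeZero (1 : R)] {S : Set Γ} (hS : S.IsPWO) :
    ∃ f : HahnSeries Γ R, f.support = S := by
  have hsupp : Function.support (S.indicator (1 : Γ → R)) = S := by simp
  exact ⟨⟨S.indicator 1, by rw [hsupp]; exact hS⟩, hsupp⟩

section Expansion

variable {Γ Γ' : Type*} [LinearOrder Γ] [LinearOrder Γ'] {R : Type*} [Semiring R]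

open HahnSeries

-- Axiom (3) of a `K`-composition.
def IsMonomialExpansion (c : HahnSeries Γᵒᵈ R → HahnSeries Γ'ᵒᵈ R) : Prop :=
  ∀ f : HahnSeries Γᵒᵈ R,
    IsSummable (fun m : f.support => c (single (m : Γᵒᵈ) 1)) ∧
      c f = famSum fun m : f.support => f.coeff (m : Γᵒᵈ) • c (single (m : Γᵒᵈ) 1)

namespace IsMonomialExpansion

variable {c : HahnSeries Γᵒᵈ R → HahnSeries Γ'ᵒᵈ R}

theorem finite_support_coeff_mul (hc : IsMonomialExpansion c) (f : HahnSeries Γᵒᵈ R)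
    (n : Γ'ᵒᵈ) :
    (Function.support fun m => f.coeff m * (c (single m 1)).coeff n).Finite := by
  refine (((hc f).1.2 n).image Subtype.val).subset fun m hm => ?_
  exact ⟨⟨m, left_ne_zero_of_mul hm⟩, right_ne_zero_of_mul hm, rfl⟩

theorem coeff_apply (hc : IsMonomialExpansion c) (f : HahnSeries Γᵒᵈ R) (n : Γ'ᵒᵈ) :
    (c f).coeff n = ∑ᶠ m, f.coeff m * (c (single m 1)).coeff n := by
  have hsmul :
      IsSummable fun m : f.support => f.coeff (m : Γᵒᵈ) • c (single (m : Γᵒᵈ) 1) :=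
    isSummable_coe ((hc f).1.toSummableFamily.smulFamily fun m : f.support => f.coeff m)
  rw [(hc f).2, coeff_famSum hsmul]
  simp only [coeff_smul, smul_eq_mul]
  rw [finsum_set_coe_eq_finsum_mem (s := f.support)
    (f := fun m => f.coeff m * (c (single m 1)).coeff n), finsum_mem_def,
    (Set.indicator_eq_self (s := f.support)).2 fun m hm => left_ne_zero_of_mul hm]

theorem exists_coeff_mul_ne_zero (hc : IsMonomialExpansion c) {f : HahnSeries Γᵒᵈ R}
    {n : Γ'ᵒᵈ} (hn : (c f).coeff n ≠ 0) :
    ∃ m, f.coeff m * (c (single m 1)).coeff n ≠ 0 := by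
  by_contra! h
  exact hn (by rw [hc.coeff_apply]; exact finsum_eq_zero_of_forall_eq_zero h)

theorem map_add (hc : IsMonomialExpansion c) (f g : HahnSeries Γᵒᵈ R) :
    c (f + g) = c f + c g := by
  ext n
  rw [coeff_add, hc.coeff_apply (f + g), hc.coeff_apply f, hc.coeff_apply g]
  simp only [coeff_add, add_mul]
  exact finsum_add_distrib (hc.finite_support_coeff_mul f n) (hc.finite_support_coeff_mul g n)

theorem map_smul (hc : IsMonomialExpansion c) (r : R) (f : HahnSeries Γᵒᵈ R) :
    c (r • f) = r • c f := by
  ext n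
  rw [coeff_smul, hc.coeff_apply (r • f), hc.coeff_apply f]
  simp only [coeff_smul, smul_eq_mul, mul_assoc]
  exact (mul_finsum' _ r (hc.finite_support_coeff_mul f n)).symm

theorem isSummable_image [NeZero (1 : R)] (hc : IsMonomialExpansion c) {S : Set Γᵒᵈ}
    (hS : S.IsPWO) : IsSummable fun m : S => c (single (m : Γᵒᵈ) 1) := by
  obtain ⟨f, rfl⟩ := exists_support_eq (R := R) hS
  exact (hc f).1

theorem map_famSum [NeZero (1 : R)] (hc : IsMonomialExpansion c) {ι : Type*}
    {f : ι → HahnSeries Γᵒᵈ R} (hf : IsSummable f) :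
    IsSummable (fun i => c (f i)) ∧ c (famSum f) = famSum fun i => c (f i) := by
  set S := ⋃ i, (f i).support
  have hS : S.IsPWO := (isSummable_iff.1 hf).1
  obtain ⟨hT, hTfin⟩ := isSummable_iff.1 (hc.isSummable_image hS)
  have hfin : ∀ n, (Function.support fun p : Γᵒᵈ × ι =>
      (f p.2).coeff p.1 * (c (single p.1 1)).coeff n).Finite := by
    intro n
    refine (((hTfin n).image Subtype.val).biUnion fun m _ => (hf.2 m).image (m, ·)).subset ?_
    rintro ⟨m, i⟩ hp
    have hm : m ∈ S := Set.mem_iUnion.2 ⟨i, left_ne_zero_of_mul hp⟩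
    exact Set.mem_biUnion ⟨⟨m, hm⟩, right_ne_zero_of_mul hp, rfl⟩
      ⟨i, left_ne_zero_of_mul hp, rfl⟩
  have hsum : IsSummable fun i => c (f i) := by
    refine isSummable_iff.2 ⟨hT.mono <| Set.iUnion_subset fun i n hn => ?_, fun n => ?_⟩
    · obtain ⟨m, hm⟩ := hc.exists_coeff_mul_ne_zero hn
      exact Set.mem_iUnion.2
        ⟨⟨m, Set.mem_iUnion.2 ⟨i, left_ne_zero_of_mul hm⟩⟩, right_ne_zero_of_mul hm⟩
    · refine ((hfin n).image Prod.snd).subset fun i hi => ?_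
      obtain ⟨m, hm⟩ := hc.exists_coeff_mul_ne_zero hi
      exact ⟨(m, i), hm, rfl⟩
  refine ⟨hsum, HahnSeries.ext <| funext fun n => ?_⟩
  rw [coeff_famSum hsum, hc.coeff_apply, finsum_congr fun i => hc.coeff_apply (f i) n,
    ← finsum_comm_of_finite (fun m i => (f i).coeff m * (c (single m 1)).coeff n)
      (hfin n)]
  refine finsum_congr fun m => ?_
  rw [coeff_famSum hf, finsum_mul' _ _ (hf.2 m)]

theorem isStronglyLinear [NeZero (1 : R)] (hc : IsMonomialExpansion c) : IsStronglyLinear c :=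
  ⟨hc.map_smul, hc.map_add, fun _ hf => hc.map_famSum hf⟩

end IsMonomialExpansion

end Expansion

namespace IsStronglyLinear

open HahnSeries SummableFamily

variable {Γ Γ' : Type*} [LinearOrder Γ] [LinearOrder Γ'] {R : Type*} [Semiring R]
  {c : HahnSeries Γᵒᵈ R → HahnSeries Γ'ᵒᵈ R}

theorem map_single (hc : IsStronglyLinear c) (a : Γᵒᵈ) (r : R) :
    c (single a r) = r • c (single a 1) := by
  rw [← hc.1]
  congr 1
  ext g
  by_cases h : g = a <;> simp [h, coeff_single_of_ne]

theorem isSummable_map_terms (hc : IsStronglyLinear c) (f : HahnSeries Γᵒᵈ R) :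
    IsSummable (fun m => c (single m (f.coeff m))) ∧
      c f = famSum fun m => c (single m (f.coeff m)) := by
  simpa only [famSum_eq_hsum _ rfl, hsum_terms, terms_apply]
    using hc.2.2 (terms f) (isSummable_coe _)

end IsStronglyLinear

section Multiplicative

variable {Γ Γ' : Type*} [AddCommMonoid Γ] [LinearOrder Γ] [IsOrderedCancelAddMonoid Γ]
  [AddCommMonoid Γ'] [LinearOrder Γ'] [IsOrderedCancelAddMonoid Γ'] {R : Type*}

open HahnSeries SummableFamily

theorem IsStronglyLinear.map_mul [Semiring R] {c : HahnSeries Γᵒᵈ R → HahnSeries Γ'ᵒᵈ R}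
    (hc : IsStronglyLinear c)
    (hsingle : ∀ (a b : Γᵒᵈ) (r s : R),
      c (single a r * single b s) = c (single a r) * c (single b s))
    (f g : HahnSeries Γᵒᵈ R) : c (f * g) = c f * c g := by
  obtain ⟨hsf, hf⟩ := hc.isSummable_map_terms f
  obtain ⟨hsg, hg⟩ := hc.isSummable_map_terms g
  have hfg := (hc.2.2 ((terms f).mul (terms g)) (isSummable_coe _)).2
  rw [famSum_eq_hsum _ rfl, hsum_mul, hsum_terms, hsum_terms] at hfg
  rw [hfg, hf, hg,
    famSum_eq_hsum (f := fun m => c (single m (f.coeff m))) hsf.toSummableFamily rfl,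
    famSum_eq_hsum (f := fun m => c (single m (g.coeff m))) hsg.toSummableFamily rfl, ← hsum_mul]
  exact famSum_eq_hsum _ (funext fun p => (hsingle _ _ _ _).symm)

namespace IsMonomialExpansion

variable [CommSemiring R] [Nontrivial R] {c : HahnSeries Γᵒᵈ R → HahnSeries Γ'ᵒᵈ R}

theorem map_single_mul_single (hc : IsMonomialExpansion c)
    (hcmul : ∀ a b : Γᵒᵈ, c (single (a + b) 1) = c (single a 1) * c (single b 1))
    (a b : Γᵒᵈ) (r s : R) : c (single a r * single b s) = c (single a r) * c (single b s) := by
  rw [single_mul_single, hc.isStronglyLinear.map_single, hc.isStronglyLinear.map_single a,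
    hc.isStronglyLinear.map_single b, hcmul, smul_mul_smul_comm]

def toRingHom (hc : IsMonomialExpansion c) (hc1 : c 1 = 1)
    (hcmul : ∀ a b : Γᵒᵈ, c (single (a + b) 1) = c (single a 1) * c (single b 1)) :
    HahnSeries Γᵒᵈ R →+* HahnSeries Γ'ᵒᵈ R where
  toFun := c
  map_one' := hc1
  map_mul' := hc.isStronglyLinear.map_mul (hc.map_single_mul_single hcmul)
  map_zero' := by simpa using hc.map_smul 0 0
  map_add' := hc.map_add

end IsMonomialExpansion

end Multiplicative

section Order

variable {Γ Γ' : Type*} [AddCommGroup Γ] [LinearOrder Γ] [IsOrderedAddMonoid Γ]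
  [AddCommGroup Γ'] [LinearOrder Γ'] [IsOrderedAddMonoid Γ'] {R : Type*}

open HahnSeries

-- With monomials in `Γᵒᵈ`, `0 < x.orderTop` says `x ≺ 1`.
theorem orderTop_pos_of_isSummable_pow [Semiring R] [NoZeroDivisors R]
    {x : HahnSeries Γᵒᵈ R} (hx : IsSummable fun n : ℕ => x ^ n) : 0 < x.orderTop := by
  obtain ⟨hpwo, hfin⟩ := isSummable_iff.1 hx
  by_cases hx0 : x = 0
  · simp [hx0]
  have hcoeff : ∀ n : ℕ, (x ^ n).coeff (n • x.order) ≠ 0 := fun n => by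
    rw [← order_pow]
    exact coeff_order_eq_zero.not.2 (pow_ne_zero n hx0)
  rw [← order_eq_orderTop_of_ne_zero hx0, WithTop.coe_pos]
  by_contra! hle
  rcases hle.lt_or_eq with hlt | heq
  · refine Set.isWF_iff_no_descending_seq.1 hpwo.isWF (fun n : ℕ => n • x.order)
      (strictAnti_nat_of_succ_lt fun n => ?_) fun n => Set.mem_iUnion.2 ⟨n, hcoeff n⟩
    rw [succ_nsmul]
    exact add_lt_of_neg_right _ hlt
  · refine Set.infinite_univ (α := ℕ) ((hfin 0).subset fun n _ => ?_)
    simpa [heq] using hcoeff n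

variable [Field R] {c : HahnSeries Γᵒᵈ R →+* HahnSeries Γ'ᵒᵈ R}

namespace IsStronglyLinear

theorem orderTop_map_pos (hc : IsStronglyLinear c) {x : HahnSeries Γᵒᵈ R}
    (hx : 0 < x.orderTop) : 0 < (c x).orderTop := by
  -- `IsStronglyLinear` only speaks of families indexed in the universe of `Γ`.
  have h := ((hc.2.2 _ ((isSummable_coe (SummableFamily.powers x)).comp_equiv
    Equiv.ulift)).1.comp_equiv Equiv.ulift.symm)
  simp only [Function.comp_def, Equiv.ulift_apply, Equiv.ulift_symm_down,
    SummableFamily.powers_of_orderTop_pos hx, map_pow] at h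
  exact orderTop_pos_of_isSummable_pow h

theorem strictMono_order_map_single (hc : IsStronglyLinear c) :
    StrictMono fun a : Γᵒᵈ => (c (single a 1)).order := by
  intro a b hab
  have hne : ∀ m : Γᵒᵈ, c (single m 1) ≠ 0 := fun m =>
    (map_ne_zero c).2 (single_ne_zero one_ne_zero)
  have hpos : 0 < (c (single (b - a) 1)).order := by
    rw [← WithTop.coe_pos, order_eq_orderTop_of_ne_zero (hne _)]
    refine hc.orderTop_map_pos ?_
    rw [orderTop_single one_ne_zero, WithTop.coe_pos]
    exact sub_pos.2 hab
  have hb : single b (1 : R) = single a 1 * single (b - a) 1 := by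
    rw [single_mul_single, add_sub_cancel, mul_one]
  simp only [hb, _root_.map_mul, order_mul (hne a) (hne _)]
  exact lt_add_of_pos_right _ hpos

theorem leadingCoeff_map (hc : IsStronglyLinear c) {f : HahnSeries Γᵒᵈ R} (hf : f ≠ 0) :
    (c f).leadingCoeff = f.leadingCoeff * (c (single f.order 1)).leadingCoeff := by
  obtain ⟨hs, hcf⟩ := hc.isSummable_map_terms f
  have hcoeff : ∀ m n,
      (c (single m (f.coeff m))).coeff n = f.coeff m * (c (single m 1)).coeff n := fun m n => by
    rw [hc.map_single, coeff_smul, smul_eq_mul]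
  have hsupp : ∀ m n, n ∈ (c (single m (f.coeff m))).support →
      f.order ≤ m ∧ (c (single m 1)).order ≤ n := fun m n hn => by
    rw [mem_support, hcoeff] at hn
    exact ⟨order_le_of_coeff_ne_zero (left_ne_zero_of_mul hn),
      order_le_of_coeff_ne_zero (right_ne_zero_of_mul hn)⟩
  have hlead : (c (single f.order (f.coeff f.order))).coeff (c (single f.order 1)).order
      = f.leadingCoeff * (c (single f.order 1)).leadingCoeff := by
    rw [hcoeff, leadingCoeff_eq, leadingCoeff_eq]
  have hmin : ∀ m n, n ∈ (c (single m (f.coeff m))).support →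
      (c (single f.order 1)).order ≤ n := fun m n hn => by
    obtain ⟨hm, hn⟩ := hsupp m n hn
    exact (hc.strictMono_order_map_single.monotone hm).trans hn
  rw [hcf, famSum_eq_hsum (f := fun m => c (single m (f.coeff m))) hs.toSummableFamily rfl,
    ← hlead]
  refine SummableFamily.hsum_leadingCoeff_of_le (a := f.order) ?_ hmin fun m hm => ?_
  · refine (orderTop_eq_of_le ?_ (hmin f.order)).symm
    rw [mem_support, hlead]
    exact mul_ne_zero (leadingCoeff_ne_zero.2 hf)
      (leadingCoeff_ne_zero.2 ((map_ne_zero c).2 (single_ne_zero one_ne_zero)))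
  · show (c (single m (f.coeff m))).coeff _ = 0
    by_cases hfm : f.coeff m = 0
    · rw [hcoeff, hfm, zero_mul]
    · rw [hcoeff, coeff_eq_zero_of_lt_order (hc.strictMono_order_map_single
        ((order_le_of_coeff_ne_zero hfm).lt_of_ne' hm)), mul_zero]

end IsStronglyLinear

theorem leadingCoeff_map_single_add_self_pos [LinearOrder R] [IsStrictOrderedRing R]
    (k : Γᵒᵈ) :
    0 < (c (single (k + k) 1)).leadingCoeff := by
  rw [← mul_one (1 : R), ← single_mul_single, map_mul, leadingCoeff_mul]
  exact mul_self_pos.2 (leadingCoeff_ne_zero.2 ((map_ne_zero c).2 (single_ne_zero one_ne_zero)))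

end Order

theorem leadCoeff_eq_leadingCoeff {Γ : Type*} [LinearOrder Γ] {R : Type*} [Zero R]
    (f : HahnSeries Γᵒᵈ R) : leadCoeff f = f.leadingCoeff := by
  unfold leadCoeff
  split_ifs with hf
  · simp [hf]
  · rw [HahnSeries.leadingCoeff_of_ne_zero hf, HahnSeries.untop_orderTop_of_ne_zero hf]

theorem IsStronglyLinear.sPos_map_iff {Γ Γ' : Type*} [AddCommGroup Γ] [LinearOrder Γ]
    [IsOrderedAddMonoid Γ] [AddCommGroup Γ'] [LinearOrder Γ'] [IsOrderedAddMonoid Γ']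
    {c : HahnSeries Γᵒᵈ ℝ →+* HahnSeries Γ'ᵒᵈ ℝ} (hc : IsStronglyLinear c)
    (hpos : ∀ m, 0 < (c (HahnSeries.single m 1)).leadingCoeff) (f : HahnSeries Γᵒᵈ ℝ) :
    SPos (c f) ↔ SPos f := by
  by_cases hf : f = 0
  · simp [hf, SPos, leadCoeff_eq_leadingCoeff]
  rw [SPos, SPos, leadCoeff_eq_leadingCoeff, leadCoeff_eq_leadingCoeff, hc.leadingCoeff_map hf]
  exact mul_pos_iff_of_pos_right (hpos _)

theorem statement16_general {N : Type} [AddCommGroup N] [LinearOrder N] [IsOrderedAddMonoid N] [Module ℝ N]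
    (M : Submodule ℝ N)
    (c : HahnSeries (↥M)ᵒᵈ ℝ → HahnSeries Nᵒᵈ ℝ)
    (hc1 : c 1 = 1)
    (hcmul : ∀ m₁ m₂ : (↥M)ᵒᵈ,
      c (HahnSeries.single (m₁ + m₂) 1)
        = c (HahnSeries.single m₁ 1) * c (HahnSeries.single m₂ 1))
    (hcsum : ∀ f : HahnSeries (↥M)ᵒᵈ ℝ,
      IsSummable (fun m : f.support => c (HahnSeries.single (m : (↥M)ᵒᵈ) 1)) ∧
      c f = famSum fun m : f.support =>
        f.coeff (m : (↥M)ᵒᵈ) • c (HahnSeries.single (m : (↥M)ᵒᵈ) 1)) :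
    IsStronglyLinear c ∧
    Function.Injective c ∧
    (∀ f g, c (f + g) = c f + c g) ∧
    (∀ f g, c (f * g) = c f * c g) ∧
    (∀ f g, SLt f g ↔ SLt (c f) (c g)) := by
  have hc : IsMonomialExpansion c := hcsum
  let φ := hc.toRingHom hc1 hcmul
  have hφ : IsStronglyLinear φ := hc.isStronglyLinear
  have hpos : ∀ m, 0 < (φ (HahnSeries.single m 1)).leadingCoeff := fun m => by
    let k : ↥M := (2⁻¹ : ℝ) • OrderDual.ofDual m
    have hk : OrderDual.toDual k + OrderDual.toDual k = m := by
      change OrderDual.toDual (k + k) = m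
      rw [← add_smul]
      norm_num
    simpa only [hk] using leadingCoeff_map_single_add_self_pos (c := φ) (OrderDual.toDual k)
  refine ⟨hφ, φ.injective, map_add φ, map_mul φ, fun f g => ?_⟩
  rw [SLt, SLt, show c g - c f = φ (g - f) from (map_sub φ g f).symm, hφ.sPos_map_iff hpos]

/-- Let `𝔑` be a monomial group with real powers, `𝔐` a subgroup
closed under real powers, with a distinguished `x ∈ 𝔐`, `x ≻ 1`, and let
`h ∈ ℝ[[𝔑]]` with `h > ℝ`. Then every `K`-composition with `h` (for `K = ℝ[[𝔐]]`) is a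
strongly `ℝ`-linear embedding of ordered fields `K → ℝ[[𝔑]]`. -/
theorem statement16 {N : Type} [AddCommGroup N] [LinearOrder N] [IsOrderedAddMonoid N] [Module ℝ N]
    (M : Submodule ℝ N) (x : N) (hxM : x ∈ M) (hx : 0 < x)
    (h : HahnSeries Nᵒᵈ ℝ) (hh : gtR h)
    (c : HahnSeries (↥M)ᵒᵈ ℝ → HahnSeries Nᵒᵈ ℝ)
    (hc1 : c 1 = 1)
    (hcx : c (HahnSeries.single (OrderDual.toDual (⟨x, hxM⟩ : ↥M)) 1) = h)
    (hcmul : ∀ m₁ m₂ : (↥M)ᵒᵈ,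
      c (HahnSeries.single (m₁ + m₂) 1)
        = c (HahnSeries.single m₁ 1) * c (HahnSeries.single m₂ 1))
    (hcsum : ∀ f : HahnSeries (↥M)ᵒᵈ ℝ,
      IsSummable (fun m : f.support => c (HahnSeries.single (m : (↥M)ᵒᵈ) 1)) ∧
      c f = famSum fun m : f.support =>
        f.coeff (m : (↥M)ᵒᵈ) • c (HahnSeries.single (m : (↥M)ᵒᵈ) 1)) :
    IsStronglyLinear c ∧
    Function.Injective c ∧
    (∀ f g, c (f + g) = c f + c g) ∧
    (∀ f g, c (f * g) = c f * c g) ∧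
    (∀ f g, SLt f g ↔ SLt (c f) (c g)) :=
  statement16_general M c hc1 hcmul hcsum

end LogHyp
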